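/- arXiv:1703.01903 — 2 statements merged into one kernel-verified Lean document; each statement's English description precedes it below -/
import Mathlib

section
/- For complex α, β with appropriate conditions and |z| < 1, ∑_{k=0}^∞ (Γ(k+α)/Γ(k+1)) ₁F₁(α+k, β, x) z^k = (1-z)^{-α} Γ(α) ₁F₁(α, β, x/(1-z)). -/
/-! Expanding `₁F₁(α + k, β, x)` and using `Γ(k + α) (α + k)_n = Γ(α + n + k)`, the left-hand side
is the double series `∑_k ∑_n Γ(α + n + k) / k! · z^k · Γ(β) / Γ(β + n) · x^n / n!`. It converges
absolutely, with the majorant obtained from `‖Γ(s)‖ ≤ Γ(Re s)` and `‖(β)_n‖ ≥ (Re α)_n`, so the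
order of summation may be swapped. The inner sum over `k` is then the binomial series
`∑_k Γ(a + k) / k! · z^k = Γ(a) (1 - z)^(-a)` with `a = α + n`, whose factor `(1 - z)^(-n)` turns
`x^n` into `(x / (1 - z))^n`. -/

open Complex

/-- The confluent hypergeometric function `₁F₁(a, b, x)` as a power series. -/
noncomputable def F11 (a b x : ℂ) : ℂ :=
  ∑' n : ℕ, (Complex.Gamma (a + n) / Complex.Gamma a) /
    (Complex.Gamma (b + n) / Complex.Gamma b) * x^n / (n.factorial : ℂ)

open Nat

theorem Complex.norm_Gamma_le_Gamma_re {s : ℂ} (hs : 0 < s.re) : ‖Gamma s‖ ≤ Real.Gamma s.re := by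
  rw [Gamma_eq_integral hs, Real.Gamma_eq_integral hs, GammaIntegral]
  refine (MeasureTheory.norm_integral_le_integral_norm _).trans_eq ?_
  refine MeasureTheory.setIntegral_congr_fun measurableSet_Ioi fun t ht => ?_
  rw [norm_mul, norm_real, Real.norm_of_nonneg (Real.exp_nonneg _),
    norm_cpow_eq_rpow_re_of_pos ht, sub_re, one_re]

theorem Complex.norm_Gamma_div_Gamma_add_nat_le {β : ℂ} {r : ℝ} (hr : 0 < r) (hrβ : r ≤ β.re)
    (n : ℕ) : ‖Gamma β / Gamma (β + n)‖ ≤ Real.Gamma r / Real.Gamma (r + n) := by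
  induction n with
  | zero =>
    simp [Gamma_ne_zero_of_re_pos (hr.trans_le hrβ), (Real.Gamma_pos_of_pos hr).ne']
  | succ n ih =>
    have hrn : 0 < r + n := by positivity
    have hβn : r + n ≤ ‖β + n‖ := by
      simpa using (add_le_add_left hrβ n).trans (re_le_norm (β + n))
    have hβn0 : β + n ≠ 0 := norm_pos_iff.mp (hrn.trans_le hβn)
    push_cast
    rw [← add_assoc, ← add_assoc, Gamma_add_one _ hβn0, Real.Gamma_add_one hrn.ne',
      div_mul_eq_div_div_swap, div_mul_eq_div_div_swap, norm_div]
    exact div_le_div₀ (div_nonneg (Real.Gamma_pos_of_pos hr).le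
      (Real.Gamma_pos_of_pos hrn).le) ih hrn hβn

theorem Ring.choose_add_nat_sub_one_eq_Gamma {a : ℂ} (ha : ∀ k : ℕ, a ≠ -k) (n : ℕ) :
    Ring.choose (a + n - 1) n = Gamma (a + n) / (Gamma a * n !) := by
  rw [Ring.choose_eq_smul, Polynomial.descPochhammer_smeval_eq_ascPochhammer,
    Polynomial.ascPochhammer_smeval_eq_eval, show a + n - 1 - n + 1 = a by ring,
    ← Gamma_add_nat_div_Gamma_eq a ha, smul_eq_mul]
  ring

theorem Complex.hasSum_Gamma_add_nat_div_factorial_mul_pow {a z : ℂ} (ha : ∀ k : ℕ, a ≠ -k)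
    (hz : ‖z‖ < 1) :
    HasSum (fun n : ℕ => Gamma (a + n) / n ! * z ^ n) (Gamma a * (1 - z) ^ (-a)) := by
  have H := (one_div_one_sub_cpow_hasFPowerSeriesOnBall_zero a).hasSum
    (y := z) (by simpa [← ofReal_norm] using hz)
  simp only [FormalMultilinearSeries.ofScalars_apply_eq, zero_add, smul_eq_mul,
    Ring.choose_add_nat_sub_one_eq_Gamma ha] at H
  have hΓ : Gamma a ≠ 0 := Gamma_ne_zero ha
  rw [cpow_neg, ← one_div]
  refine (H.mul_left (Gamma a)).congr_fun fun n => ?_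
  field_simp

theorem Real.hasSum_Gamma_add_nat_div_factorial_mul_pow {r v : ℝ} (hr : ∀ k : ℕ, r ≠ -k)
    (hv : |v| < 1) :
    HasSum (fun n : ℕ => Real.Gamma (r + n) / n ! * v ^ n) (Real.Gamma r * (1 - v) ^ (-r)) := by
  have hv1 : 0 ≤ 1 - v := by linarith [le_abs_self v]
  have H := Complex.hasSum_Gamma_add_nat_div_factorial_mul_pow (a := r) (z := v)
    (fun k h => hr k (by exact_mod_cast h)) (by simpa using hv)
  rw [← hasSum_ofReal]
  simpa [← Gamma_ofReal, ofReal_cpow hv1] using H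

noncomputable def F11DoubleTerm (α β x z : ℂ) (k n : ℕ) : ℂ :=
  Gamma (α + n + k) / k ! * z ^ k * (Gamma β / Gamma (β + n) * x ^ n / n !)

theorem summable_F11DoubleTerm_majorant {r v w : ℝ} (hr : 0 < r) (hv0 : 0 ≤ v) (hv : v < 1)
    (hw : 0 ≤ w) :
    Summable fun p : ℕ × ℕ => Real.Gamma (r + p.1 + p.2) / p.2 ! * v ^ p.2 *
      (Real.Gamma r / Real.Gamma (r + p.1) * w ^ p.1 / p.1 !) := by
  have hv1 : 0 < 1 - v := by linarith
  have hinner : ∀ n : ℕ, HasSum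
      (fun k : ℕ => Real.Gamma (r + n + k) / k ! * v ^ k *
        (Real.Gamma r / Real.Gamma (r + n) * w ^ n / n !))
      (Real.Gamma r * (1 - v) ^ (-r) * ((w / (1 - v)) ^ n / n !)) := by
    intro n
    have hrn : 0 < r + n := by positivity
    have hΓ : Real.Gamma (r + n) ≠ 0 := (Real.Gamma_pos_of_pos hrn).ne'
    have hsum : Real.Gamma (r + n) * (1 - v) ^ (-(r + n)) *
        (Real.Gamma r / Real.Gamma (r + n) * w ^ n / n !) =
        Real.Gamma r * (1 - v) ^ (-r) * ((w / (1 - v)) ^ n / n !) := by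
      rw [neg_add, Real.rpow_add hv1, Real.rpow_neg hv1.le (n : ℝ), Real.rpow_natCast, div_pow]
      field_simp
    rw [← hsum]
    refine (Real.hasSum_Gamma_add_nat_div_factorial_mul_pow (fun k h => ?_) ?_).mul_right _
    · linarith [h ▸ hrn, (k.cast_nonneg : (0 : ℝ) ≤ k)]
    · rwa [abs_of_nonneg hv0]
  refine (summable_prod_of_nonneg fun p => by positivity).mpr
    ⟨fun n => (hinner n).summable, ?_⟩
  simp only [fun n => (hinner n).tsum_eq]
  exact (Real.summable_pow_div_factorial _).mul_left _

section DoubleSeries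

variable {α β x z : ℂ}

theorem tsum_F11DoubleTerm_snd (hα : ∀ m : ℕ, α ≠ -m) (k : ℕ) :
    ∑' n, F11DoubleTerm α β x z k n =
      Gamma (k + α) / Gamma (k + 1) * F11 (α + k) β x * z ^ k := by
  have hΓ : Gamma (α + k) ≠ 0 :=
    Gamma_ne_zero fun m h => hα (m + k) (by push_cast; linear_combination h)
  rw [F11, ← tsum_mul_left, ← tsum_mul_right, Gamma_nat_eq_factorial, add_comm (k : ℂ) α]
  refine tsum_congr fun n => ?_
  rw [F11DoubleTerm, add_right_comm]
  field_simp

theorem hasSum_F11DoubleTerm_fst (hα : ∀ m : ℕ, α ≠ -m) (hz : ‖z‖ < 1) (n : ℕ) :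
    HasSum (fun k => F11DoubleTerm α β x z k n) ((1 - z) ^ (-α) * Gamma α *
      ((Gamma (α + n) / Gamma α) / (Gamma (β + n) / Gamma β) * (x / (1 - z)) ^ n / n !)) := by
  have hαn : ∀ m : ℕ, α + n ≠ -m := fun m h => hα (m + n) (by push_cast; linear_combination h)
  have h1z : 1 - z ≠ 0 := sub_ne_zero.mpr fun h => by simp [← h] at hz
  have hΓ : Gamma α ≠ 0 := Gamma_ne_zero hα
  have hsum : Gamma (α + n) * (1 - z) ^ (-(α + n)) * (Gamma β / Gamma (β + n) * x ^ n / n !) =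
      (1 - z) ^ (-α) * Gamma α *
        ((Gamma (α + n) / Gamma α) / (Gamma (β + n) / Gamma β) * (x / (1 - z)) ^ n / n !) := by
    rw [neg_add, cpow_add _ _ h1z, cpow_neg _ (n : ℂ), cpow_natCast, div_pow]
    field_simp
  rw [← hsum]
  exact (hasSum_Gamma_add_nat_div_factorial_mul_pow hαn hz).mul_right _

theorem norm_F11DoubleTerm_le (hα : 0 < α.re) (hαβ : α.re ≤ β.re) (k n : ℕ) :
    ‖F11DoubleTerm α β x z k n‖ ≤ Real.Gamma (α.re + n + k) / k ! * ‖z‖ ^ k *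
      (Real.Gamma α.re / Real.Gamma (α.re + n) * ‖x‖ ^ n / n !) := by
  have hΓ := norm_Gamma_le_Gamma_re (s := α + n + k) (by simp; positivity)
  simp only [add_re, natCast_re] at hΓ
  simp only [F11DoubleTerm, norm_mul, norm_pow, norm_div _ ((_ ! : ℕ) : ℂ), norm_natCast]
  gcongr
  exact norm_Gamma_div_Gamma_add_nat_le hα hαβ n

theorem summable_F11DoubleTerm (hα : 0 < α.re) (hαβ : α.re ≤ β.re)
    (hz : ‖z‖ < 1) : Summable (Function.uncurry (F11DoubleTerm α β x z)) :=
  .of_norm_bounded (summable_F11DoubleTerm_majorant hα (norm_nonneg z) hz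
    (norm_nonneg x)).prod_symm fun p => norm_F11DoubleTerm_le hα hαβ p.1 p.2

end DoubleSeries

theorem confluent_generating_function (α β x z : ℂ)
    (hα : 0 < α.re) (hβ : α.re < β.re) (hz : ‖z‖ < 1) :
    ∑' k : ℕ, (Complex.Gamma ((k:ℂ) + α) / Complex.Gamma ((k:ℂ) + 1)) *
        F11 (α + k) β x * z^k =
      (1 - z)^(-α) * Complex.Gamma α * F11 α β (x / (1 - z)) := by
  have hα' : ∀ m : ℕ, α ≠ -m := fun m h => by
    simp only [h, neg_re, natCast_re, Left.neg_pos_iff] at hα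
    exact hα.not_ge m.cast_nonneg
  calc _ = ∑' (k : ℕ) (n : ℕ), F11DoubleTerm α β x z k n :=
        tsum_congr fun k => (tsum_F11DoubleTerm_snd hα' k).symm
    _ = ∑' (n : ℕ) (k : ℕ), F11DoubleTerm α β x z k n :=
        (summable_F11DoubleTerm hα hβ.le hz).tsum_comm.symm
    _ = _ := by
      rw [F11, ← tsum_mul_left]
      exact tsum_congr fun n => (hasSum_F11DoubleTerm_fst hα' hz n).tsum_eq
end

section
/- For 0 < Re(s) < Re(α) and Re(β) > Re(α) > 0, ∫₀^∞ p^{s-1} ₁F₁(α, β, -p) dp = (Γ(α-s) Γ(β) Γ(s))/(Γ(α) Γ(β-s)). -/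
open Complex MeasureTheory

/-!
Integrating the exponential series term by term against the Beta density gives Euler's
representation `₁F₁(α, β, -p) = Γ(β) / (Γ(α) Γ(β - α)) ∫₀¹ t^(α-1) (1-t)^(β-α-1) e^(-pt) dt`.
After exchanging the two integrals, the `p`-integral is `Γ(s) t^(-s)`, and what remains is the
Beta integral `B(α - s, β - α)`. Fubini applies because the same computation with absolute values
yields `Γ(Re s) ∫₀¹ |t^(-s) t^(α-1) (1-t)^(β-α-1)| dt < ∞`.
-/

open Set
open scoped Nat

lemma integrableOn_Ioo_cpow_mul_one_sub_cpow {u v : ℂ} (hu : 0 < u.re) (hv : 0 < v.re) :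
    IntegrableOn (fun t : ℝ => (t : ℂ) ^ (u - 1) * (1 - (t : ℂ)) ^ (v - 1)) (Ioo 0 1) :=
  (intervalIntegrable_iff_integrableOn_Ioo_of_le zero_le_one).mp (betaIntegral_convergent hu hv)

lemma integral_Ioo_cpow_mul_one_sub_cpow {u v : ℂ} (hu : 0 < u.re) (hv : 0 < v.re) :
    ∫ t in Ioo (0 : ℝ) 1, (t : ℂ) ^ (u - 1) * (1 - (t : ℂ)) ^ (v - 1) =
      Gamma u * Gamma v / Gamma (u + v) := by
  rw [eq_div_iff (Gamma_ne_zero_of_re_pos (by rw [add_re]; positivity)),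
    Gamma_mul_Gamma_eq_betaIntegral hu hv, betaIntegral, intervalIntegral.integral_of_le zero_le_one,
    integral_Ioc_eq_integral_Ioo, mul_comm]

lemma integral_mul_cexp_eq_tsum {μ : Measure ℝ} {g : ℝ → ℂ} (hg : Integrable g μ)
    (hμ : ∀ᵐ t ∂μ, |t| ≤ 1) (z : ℂ) :
    ∫ t, g t * cexp (z * t) ∂μ = ∑' n : ℕ, z ^ n / n ! * ∫ t, (t : ℂ) ^ n * g t ∂μ := by
  set F : ℕ → ℝ → ℂ := fun n t => z ^ n / n ! * ((t : ℂ) ^ n * g t) with hF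
  have hF_le : ∀ n, ∀ᵐ t ∂μ, ‖F n t‖ ≤ ‖z‖ ^ n / n ! * ‖g t‖ := fun n => by
    filter_upwards [hμ] with t ht
    simp only [hF, norm_mul, norm_div, norm_pow, norm_natCast, norm_real, Real.norm_eq_abs]
    gcongr
    exact mul_le_of_le_one_left (norm_nonneg _) (pow_le_one₀ (abs_nonneg t) ht)
  have hF_int : ∀ n, Integrable (F n) μ := fun n =>
    (hg.norm.const_mul _).mono' (by fun_prop) (hF_le n)
  have hF_sum : Summable fun n => ∫ t, ‖F n t‖ ∂μ := by
    refine Summable.of_nonneg_of_le (fun n => integral_nonneg fun t => norm_nonneg _)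
      (fun n => ?_) ((Real.summable_pow_div_factorial ‖z‖).mul_right (∫ t, ‖g t‖ ∂μ))
    rw [← integral_const_mul]
    exact integral_mono_ae (hF_int n).norm (hg.norm.const_mul _) (hF_le n)
  have hexp : ∀ t : ℝ, g t * cexp (z * t) = ∑' n, F n t := fun t => by
    rw [exp_eq_exp_ℂ, NormedSpace.exp_eq_tsum_div, ← tsum_mul_left]
    exact tsum_congr fun n => by rw [hF, mul_pow]; ring
  simp_rw [hexp, ← integral_tsum_of_summable_integral_norm hF_int hF_sum, hF, integral_const_mul]

theorem F11_eq_integral {a b : ℂ} (ha : 0 < a.re) (hab : a.re < b.re) (z : ℂ) :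
    F11 a b z = Gamma b / (Gamma a * Gamma (b - a)) *
      ∫ t in Ioo (0 : ℝ) 1, (t : ℂ) ^ (a - 1) * (1 - (t : ℂ)) ^ (b - a - 1) * cexp (z * t) := by
  have hba : 0 < (b - a).re := by rw [sub_re]; linarith
  have hb : 0 < b.re := ha.trans hab
  have hmoment : ∀ n : ℕ, ∫ t in Ioo (0 : ℝ) 1,
      (t : ℂ) ^ n * ((t : ℂ) ^ (a - 1) * (1 - (t : ℂ)) ^ (b - a - 1)) =
        Gamma (a + n) * Gamma (b - a) / Gamma (b + n) := fun n => by
    rw [← show a + n + (b - a) = b + n by ring,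
      ← integral_Ioo_cpow_mul_one_sub_cpow (by simp; positivity) hba]
    refine setIntegral_congr_fun measurableSet_Ioo fun t ht => ?_
    rw [← mul_assoc, ← cpow_natCast, ← cpow_add _ _ (ofReal_ne_zero.2 ht.1.ne')]
    ring_nf
  have hunit : ∀ᵐ t ∂(volume.restrict (Ioo (0 : ℝ) 1)), |t| ≤ 1 :=
    (ae_restrict_mem measurableSet_Ioo).mono fun t ht => abs_le.2 ⟨by linarith [ht.1], ht.2.le⟩
  rw [integral_mul_cexp_eq_tsum (integrableOn_Ioo_cpow_mul_one_sub_cpow ha hba) hunit, F11,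
    ← tsum_mul_left]
  refine tsum_congr fun n => ?_
  have hΓa := Gamma_ne_zero_of_re_pos ha
  have hΓb := Gamma_ne_zero_of_re_pos hb
  have hΓba := Gamma_ne_zero_of_re_pos hba
  have hΓbn := Gamma_ne_zero_of_re_pos (s := b + n) (by simp; positivity)
  rw [hmoment n]
  field_simp

lemma norm_cpow_mul_cexp_neg_mul {p : ℝ} (hp : 0 < p) (a : ℂ) (r : ℝ) :
    ‖(p : ℂ) ^ (a - 1) * cexp (-(r * p))‖ = p ^ (a.re - 1) * Real.exp (-(r * p)) := by
  rw [norm_mul, norm_cpow_eq_rpow_re_of_pos hp, ← ofReal_mul, ← ofReal_neg, norm_exp_ofReal]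
  simp

lemma integrableOn_Ioi_cpow_mul_cexp_neg_mul {a : ℂ} (ha : 0 < a.re) {r : ℝ} (hr : 0 < r) :
    IntegrableOn (fun p : ℝ => (p : ℂ) ^ (a - 1) * cexp (-(r * p))) (Ioi 0) := by
  have hreal : IntegrableOn (fun p : ℝ => p ^ (a.re - 1) * Real.exp (-(r * p))) (Ioi 0) :=
    Integrable.of_integral_ne_zero <| by
      rw [Real.integral_rpow_mul_exp_neg_mul_Ioi ha hr]
      exact (mul_pos (by positivity) (Real.Gamma_pos_of_pos ha)).ne'
  exact hreal.mono' (by fun_prop) <| (ae_restrict_mem measurableSet_Ioi).mono fun p hp =>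
    (norm_cpow_mul_cexp_neg_mul hp a r).le

lemma ofReal_one_div_cpow {t : ℝ} (ht : 0 < t) (s : ℂ) : (1 / (t : ℂ)) ^ s = (t : ℂ) ^ (-s) := by
  rw [one_div, inv_cpow _ _ (by rw [arg_ofReal_of_nonneg ht.le]; exact Real.pi_ne_zero.symm),
    cpow_neg]

theorem integral_Ioi_cpow_mul_integral_mul_cexp_neg_mul {S : Set ℝ} (hS : MeasurableSet S)
    (hS0 : S ⊆ Ioi 0) {s : ℂ} (hs : 0 < s.re) {g : ℝ → ℂ}
    (hg : IntegrableOn (fun t : ℝ => (t : ℂ) ^ (-s) * g t) S) :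
    ∫ p in Ioi (0 : ℝ), (p : ℂ) ^ (s - 1) * ∫ t in S, g t * cexp (-(t * p)) =
      Gamma s * ∫ t in S, (t : ℂ) ^ (-s) * g t := by
  set f : ℝ → ℝ → ℂ := fun p t => g t * ((p : ℂ) ^ (s - 1) * cexp (-(t * p))) with hf
  have hg_meas : AEStronglyMeasurable g (volume.restrict S) := by
    refine ((by fun_prop : Measurable fun t : ℝ => (t : ℂ) ^ s).aestronglyMeasurable.mul
      hg.aestronglyMeasurable).congr ?_
    filter_upwards [ae_restrict_mem hS] with t ht
    rw [Pi.mul_apply, ← mul_assoc, ← cpow_add _ _ (ofReal_ne_zero.2 (hS0 ht).ne'),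
      add_neg_cancel, cpow_zero, one_mul]
  have hslice : ∀ t ∈ S, ∫ p in Ioi 0, f p t = (t : ℂ) ^ (-s) * g t * Gamma s := fun t ht => by
    rw [integral_const_mul, integral_cpow_mul_exp_neg_mul_Ioi hs (hS0 ht),
      ofReal_one_div_cpow (hS0 ht)]
    ring
  have hnorm_slice : ∀ t ∈ S,
      ∫ p in Ioi 0, ‖f p t‖ = ‖(t : ℂ) ^ (-s) * g t‖ * Real.Gamma s.re := fun t ht => by
    have ht0 : 0 < t := hS0 ht
    rw [setIntegral_congr_fun measurableSet_Ioi fun p hp => by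
        simp only [hf]; rw [norm_mul, norm_cpow_mul_cexp_neg_mul hp],
      integral_const_mul, Real.integral_rpow_mul_exp_neg_mul_Ioi hs ht0, norm_mul,
      norm_cpow_eq_rpow_re_of_pos ht0, neg_re, Real.rpow_neg ht0.le, one_div,
      Real.inv_rpow ht0.le]
    ring
  have hint : Integrable (Function.uncurry f)
      ((volume.restrict (Ioi 0)).prod (volume.restrict S)) := by
    have hmeas : AEStronglyMeasurable (Function.uncurry f)
        ((volume.restrict (Ioi 0)).prod (volume.restrict S)) :=
      hg_meas.comp_snd.mul (by fun_prop : Measurable fun z : ℝ × ℝ =>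
        (z.1 : ℂ) ^ (s - 1) * cexp (-(z.2 * z.1))).aestronglyMeasurable
    refine (integrable_prod_iff' hmeas).2 ⟨?_, ?_⟩
    · filter_upwards [ae_restrict_mem hS] with t ht
      exact (integrableOn_Ioi_cpow_mul_cexp_neg_mul hs (hS0 ht)).const_mul (g t)
    · refine (hg.norm.mul_const (Real.Gamma s.re)).congr ?_
      filter_upwards [ae_restrict_mem hS] with t ht
      exact (hnorm_slice t ht).symm
  calc ∫ p in Ioi (0 : ℝ), (p : ℂ) ^ (s - 1) * ∫ t in S, g t * cexp (-(t * p))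
      = ∫ p in Ioi (0 : ℝ), ∫ t in S, f p t := by
        refine setIntegral_congr_fun measurableSet_Ioi fun p _ => ?_
        rw [← integral_const_mul]
        exact integral_congr_ae (ae_of_all _ fun t => by simp only [hf]; ring)
    _ = ∫ t in S, ∫ p in Ioi (0 : ℝ), f p t := integral_integral_swap hint
    _ = ∫ t in S, (t : ℂ) ^ (-s) * g t * Gamma s := setIntegral_congr_fun hS hslice
    _ = Gamma s * ∫ t in S, (t : ℂ) ^ (-s) * g t := by rw [integral_mul_const, mul_comm]

theorem confluent_mellin_transform (α β s : ℂ)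
    (hs0 : 0 < s.re) (hsα : s.re < α.re) (hαβ : α.re < β.re) (hα : 0 < α.re) :
    ∫ p in Set.Ioi (0:ℝ), (p:ℂ)^(s - 1) * F11 α β (-(p:ℂ)) =
      (Complex.Gamma (α - s) * Complex.Gamma β * Complex.Gamma s) /
        (Complex.Gamma α * Complex.Gamma (β - s)) := by
  have hαs : 0 < (α - s).re := by rw [sub_re]; linarith
  have hβα : 0 < (β - α).re := by rw [sub_re]; linarith
  set g : ℝ → ℂ := fun t => (t : ℂ) ^ (α - 1) * (1 - (t : ℂ)) ^ (β - α - 1)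
  have hshift : ∀ t ∈ Ioo (0 : ℝ) 1,
      (t : ℂ) ^ (-s) * g t = (t : ℂ) ^ (α - s - 1) * (1 - (t : ℂ)) ^ (β - α - 1) := fun t ht => by
    rw [← mul_assoc, ← cpow_add _ _ (ofReal_ne_zero.2 ht.1.ne')]
    ring_nf
  have hg : IntegrableOn (fun t : ℝ => (t : ℂ) ^ (-s) * g t) (Ioo 0 1) :=
    (integrableOn_Ioo_cpow_mul_one_sub_cpow hαs hβα).congr_fun (fun t ht => (hshift t ht).symm)
      measurableSet_Ioo
  calc ∫ p in Ioi (0 : ℝ), (p : ℂ) ^ (s - 1) * F11 α β (-(p : ℂ))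
      = Gamma β / (Gamma α * Gamma (β - α)) *
          ∫ p in Ioi (0 : ℝ), (p : ℂ) ^ (s - 1) * ∫ t in Ioo 0 1, g t * cexp (-(t * p)) := by
        rw [← integral_const_mul]
        refine integral_congr_ae (ae_of_all _ fun p => ?_)
        simp only [F11_eq_integral hα hαβ, neg_mul, mul_comm (p : ℂ), g]
        ring
    _ = Gamma β / (Gamma α * Gamma (β - α)) *
          (Gamma s * (Gamma (α - s) * Gamma (β - α) / Gamma (β - s))) := by
        rw [integral_Ioi_cpow_mul_integral_mul_cexp_neg_mul measurableSet_Ioo Ioo_subset_Ioi_self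
          hs0 hg, setIntegral_congr_fun measurableSet_Ioo hshift,
          integral_Ioo_cpow_mul_one_sub_cpow hαs hβα, show α - s + (β - α) = β - s by ring]
    _ = Gamma (α - s) * Gamma β * Gamma s / (Gamma α * Gamma (β - s)) := by
        have hΓβα := Gamma_ne_zero_of_re_pos hβα
        field_simp
end
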